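/- arXiv:math/0606123 — 3 statements merged into one kernel-verified Lean document; each statement's English description precedes it below -/
import Mathlib

section
/- Let 1 ≤ k ≤ n and regard S_k as the subgroup {w ∈ S_n : w(x) = x for all x > k} of S_n. Let g ∈ S_n and let w_0 ∈ S_k be any element attaining the maximum of the function w ↦ ν(wg) on S_k (i.e. ν(w_0 g) ≥ ν(w g) for all w ∈ S_k). Then the identity ∑_{w ∈ S_k} α^{n−ν(wg)} = α^{n−ν(w_0 g)} · (1+α)(1+2α)⋯(1+(k−1)α) holds in the polynomial ring ℤ[α]. -/
/-!
Put `h = w₀ g`. Multiplying a permutation on the left by a transposition `(i j)` merges the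
cycles through `i` and `j` when they are distinct and splits their common cycle otherwise.
So if two of the points `1, …, k` lay on one cycle of `h`, then `(i j) w₀ ∈ S_k` would beat
`w₀`; by maximality they lie on distinct cycles of `h`. Then every `u ∈ S_k` moves at most one
point of each cycle of `h`, and peeling transpositions off `u` gives
`ν(u h) + n = ν(u) + ν(h)`. After the substitution `w = u w₀` the sum becomes
`α^(n - ν(h)) ∑_{u ∈ S_k} α^(n - ν(u))`, and this last sum is `∏_{j < k} (1 + j α)`:
writing `w ∈ S_{k+1}` as `(k+1, t) u` with `t = w(k+1)` and `u ∈ S_k`, the choice `t = k+1`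
keeps `ν(u)` and each of the `k` other choices lowers it by one.
-/

/-- The number of cycles `ν(w)` of a permutation `w` of `{1,…,n}`:
the number of orbits of `w` acting on `Fin n` (fixed points count as cycles of length 1). -/
noncomputable def permCycles {n : ℕ} (w : Equiv.Perm (Fin n)) : ℕ :=
  Nat.card (MulAction.orbitRel.Quotient (Subgroup.zpowers w) (Fin n))

/-- Membership in the subgroup `S_k = {w ∈ S_n : w(x) = x for all x > k}` of `S_n`
(with `Fin n` indexed from `0`, i.e. `w x = x` whenever `k ≤ x`). -/
def inSymSub (n k : ℕ) (w : Equiv.Perm (Fin n)) : Prop :=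
  ∀ x : Fin n, k ≤ (x : ℕ) → w x = x

instance (n k : ℕ) : DecidablePred (inSymSub n k) := by
  unfold inSymSub; infer_instance

open Equiv Equiv.Perm Finset

namespace Equiv.Perm

variable {α : Type*}

noncomputable def numCycles (σ : Perm α) : ℕ :=
  Nat.card (Quotient (SameCycle.setoid σ))

theorem orbitRel_zpowers (σ : Perm α) :
    MulAction.orbitRel (Subgroup.zpowers σ) α = SameCycle.setoid σ := by
  ext a b
  rw [MulAction.orbitRel_apply, MulAction.mem_orbit_iff]
  change _ ↔ σ.SameCycle a b
  rw [sameCycle_comm]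
  constructor
  · rintro ⟨⟨_, q, rfl⟩, rfl⟩
    exact ⟨q, rfl⟩
  · rintro ⟨q, rfl⟩
    exact ⟨⟨σ ^ q, q, rfl⟩, rfl⟩

variable {σ : Perm α} {i j x y : α}

theorem numCycles_one : numCycles (1 : Perm α) = Nat.card α :=
  (Nat.card_eq_of_bijective _ ⟨fun _ _ h => sameCycle_one.1 (Quotient.exact h),
    Quotient.mk_surjective⟩).symm

section Finite

variable [Finite α]

theorem SameCycle.mem_of_mapsTo {s : Set α} (hs : Set.MapsTo σ s s) (hx : x ∈ s)
    (h : σ.SameCycle x y) : y ∈ s := by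
  obtain ⟨t, rfl⟩ := h.exists_nat_pow_eq
  exact hs.perm_pow t hx

theorem numCycles_le_card (σ : Perm α) : numCycles σ ≤ Nat.card α :=
  Nat.card_le_card_of_surjective _ Quotient.mk_surjective

theorem sameCycle_mul_iff_of_fixes {u h : Perm α} (hu : ∀ z, h.SameCycle x z → u z = z) :
    (u * h).SameCycle x y ↔ h.SameCycle x y := by
  have hpow : ∀ t : ℕ, ((u * h) ^ t) x = (h ^ t) x := by
    intro t
    induction t with
    | zero => rfl
    | succ t ih =>
      rw [pow_succ', mul_apply, ih, mul_apply,
        hu _ (sameCycle_apply_right.2 (sameCycle_pow_right.2 .rfl)), ← mul_apply, ← pow_succ']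
  constructor
  · intro hxy
    obtain ⟨t, rfl⟩ := hxy.exists_nat_pow_eq
    rw [hpow]
    exact sameCycle_pow_right.2 .rfl
  · intro hxy
    obtain ⟨t, rfl⟩ := hxy.exists_nat_pow_eq
    rw [← hpow]
    exact sameCycle_pow_right.2 .rfl

end Finite

section Swap

variable [DecidableEq α]

theorem sameCycle_swap_apply (h : σ.SameCycle i j) (x : α) : σ.SameCycle x (swap i j x) := by
  rcases eq_or_ne x i with rfl | hi
  · rwa [swap_apply_left]
  rcases eq_or_ne x j with rfl | hj
  · rw [swap_apply_right]
    exact h.symm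
  · rw [swap_apply_of_ne_of_ne hi hj]

variable [Finite α]

/- The forward `σ`-orbit of `j` avoids `i`, so `swap i j * σ` follows it from `j` up to
`σ⁻¹ j`, which it then sends to `i`. -/
theorem sameCycle_swap_mul_of_not_sameCycle (hij : ¬σ.SameCycle i j) :
    (swap i j * σ).SameCycle j i := by
  set D := {y | σ.SameCycle j y ∧ (swap i j * σ).SameCycle j y}
  have hD : Set.MapsTo σ D D := by
    rintro y ⟨hσ, hτ⟩
    refine ⟨sameCycle_apply_right.2 hσ, ?_⟩
    rcases eq_or_ne (σ y) j with hj | hj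
    · rw [hj]
    have hi : σ y ≠ i := fun hi => hij (hi ▸ sameCycle_apply_right.2 hσ).symm
    have := sameCycle_apply_right.2 hτ
    rwa [mul_apply, swap_apply_of_ne_of_ne hi hj] at this
  have hj : σ⁻¹ j ∈ D := SameCycle.mem_of_mapsTo hD ⟨.rfl, .rfl⟩ ⟨-1, by simp⟩
  have := sameCycle_apply_right.2 hj.2
  rwa [mul_apply, show σ (σ⁻¹ j) = j by simp, swap_apply_right] at this

theorem SameCycle.swap_mul (hij : ¬σ.SameCycle i j) (h : σ.SameCycle x y) :
    (swap i j * σ).SameCycle x y := by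
  have hji := sameCycle_swap_mul_of_not_sameCycle hij
  refine h.mem_of_mapsTo (s := {y | (swap i j * σ).SameCycle x y}) (fun y hy => ?_) .rfl
  refine (sameCycle_apply_right.2 hy).trans ?_
  rw [mul_apply]
  exact (sameCycle_swap_apply hji.symm (σ y)).symm

/- The cycles of `swap i j * σ` are those of `σ` with the cycles of `i` and `j` merged:
`z ↦ if σ.SameCycle j z then i else z` moves the cycle of `j` onto `i`. -/
open Classical in
theorem sameCycle_swap_mul_iff (hij : ¬σ.SameCycle i j) :
    (swap i j * σ).SameCycle x y ↔
      σ.SameCycle (if σ.SameCycle j x then i else x) (if σ.SameCycle j y then i else y) := by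
  let φ : α → α := fun z => if σ.SameCycle j z then i else z
  change _ ↔ σ.SameCycle (φ x) (φ y)
  have hji := sameCycle_swap_mul_of_not_sameCycle hij
  have hi : ¬σ.SameCycle j i := fun h => hij h.symm
  constructor
  · intro h
    refine h.mem_of_mapsTo (s := {y | σ.SameCycle (φ x) (φ y)})
      (fun z (hxz : σ.SameCycle _ _) => hxz.trans ?_) SameCycle.rfl
    have hz : σ.SameCycle z (σ z) := sameCycle_apply_right.2 .rfl
    simp only [φ, mul_apply]
    rcases eq_or_ne (σ z) i with hzi | hzi
    · have hzj : ¬σ.SameCycle j z := fun h => hi (h.trans (hzi ▸ hz))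
      rw [hzi, swap_apply_left, if_pos (SameCycle.refl σ j), if_neg hzj]
      exact hzi ▸ hz
    rcases eq_or_ne (σ z) j with hzj | hzj
    · rw [hzj, swap_apply_right, if_pos (hzj ▸ hz).symm, if_neg hi]
    · rw [swap_apply_of_ne_of_ne hzi hzj, sameCycle_apply_right]
      split_ifs
      · rfl
      · exact hz
  · have hφ : ∀ z, (swap i j * σ).SameCycle z (φ z) := fun z => by
      simp only [φ]
      split_ifs with hz
      · exact (hz.symm.swap_mul hij).trans hji
      · rfl
    exact fun h => (hφ x).trans ((h.swap_mul hij).trans (hφ y).symm)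

theorem numCycles_swap_mul_add_one (hij : ¬σ.SameCycle i j) :
    numCycles (swap i j * σ) + 1 = numCycles σ := by
  classical
  let φ : α → α := fun z => if σ.SameCycle j z then i else z
  have hφ : ∀ z, ¬σ.SameCycle j (φ z) := fun z => by
    by_cases hz : σ.SameCycle j z
    · simpa [φ, hz] using fun h => hij h.symm
    · simp [φ, hz]
  let e : Option (Quotient (SameCycle.setoid (swap i j * σ))) → Quotient (SameCycle.setoid σ) :=
    fun o => o.elim ⟦j⟧ (Quotient.map' φ fun _ _ => (sameCycle_swap_mul_iff hij).1)
  have he : Function.Bijective e := by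
    constructor
    · rintro (_ | ⟨⟨a⟩⟩) (_ | ⟨⟨b⟩⟩) hab
      · rfl
      · exact absurd (Quotient.exact hab) (hφ b)
      · exact absurd (Quotient.exact hab).symm (hφ a)
      · exact congrArg some (Quotient.sound ((sameCycle_swap_mul_iff hij).2 (Quotient.exact hab)))
    · rintro ⟨a⟩
      by_cases ha : σ.SameCycle j a
      · exact ⟨none, Quotient.sound ha⟩
      · exact ⟨some ⟦a⟧, congrArg _ (if_neg ha)⟩
  rw [numCycles, numCycles, ← Finite.card_option, Nat.card_eq_of_bijective e he]

theorem not_sameCycle_swap_mul_of_sameCycle (hne : i ≠ j) (h : σ.SameCycle i j) :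
    ¬(swap i j * σ).SameCycle i j := by
  have hex : ∃ m, 0 < m ∧ (σ ^ m) i = j := by
    obtain ⟨m, hm, -, hmj⟩ := h.exists_pow_eq''
    exact ⟨m, hm, hmj⟩
  obtain ⟨hm, hmj⟩ := Nat.find_spec hex
  set m := Nat.find hex
  have hmin : ∀ s, 0 < s → s < m → (σ ^ s) i ≠ j := fun s hs hsm h =>
    Nat.find_min hex hsm ⟨hs, h⟩
  have hret : ∀ s, 0 < s → s < m → (σ ^ s) i ≠ i := fun s hs hsm h => by
    have : (σ ^ (m - s)) ((σ ^ s) i) = j := by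
      rw [← mul_apply, ← pow_add, Nat.sub_add_cancel hsm.le, hmj]
    exact hmin (m - s) (by omega) (by omega) (h ▸ this)
  -- the arc `i, σ i, …, σ^(m-1) i` is closed under `swap i j * σ` and misses `j`
  have hD : Set.MapsTo (swap i j * σ) {y | ∃ s < m, (σ ^ s) i = y}
      {y | ∃ s < m, (σ ^ s) i = y} := by
    rintro _ ⟨s, hs, rfl⟩
    rw [mul_apply, ← mul_apply σ, ← pow_succ']
    obtain hsm | hsm : s + 1 = m ∨ s + 1 < m := by omega
    · exact ⟨0, hm, by rw [hsm, hmj, swap_apply_right, pow_zero, one_apply]⟩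
    · exact ⟨s + 1, hsm, by
        rw [swap_apply_of_ne_of_ne (hret _ s.succ_pos hsm) (hmin _ s.succ_pos hsm)]⟩
  intro hτ
  obtain ⟨s, hs, hsj⟩ := hτ.mem_of_mapsTo hD ⟨0, hm, rfl⟩
  rcases Nat.eq_zero_or_pos s with rfl | hs0
  · exact hne hsj
  · exact hmin s hs0 hs hsj

theorem numCycles_swap_mul_of_sameCycle (hne : i ≠ j) (h : σ.SameCycle i j) :
    numCycles (swap i j * σ) = numCycles σ + 1 := by
  have := numCycles_swap_mul_add_one (not_sameCycle_swap_mul_of_sameCycle hne h)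
  rwa [swap_mul_self_mul, eq_comm] at this

end Swap

section Support

variable [DecidableEq α] [Fintype α] {u h : Perm α}

theorem numCycles_mul_add_card
    (hsep : ∀ x ∈ u.support, ∀ y ∈ u.support, h.SameCycle x y → x = y) :
    numCycles (u * h) + Nat.card α = numCycles u + numCycles h := by
  induction hc : u.support.card using Nat.strong_induction_on generalizing u with
  | _ m ih =>
  rcases eq_or_ne u 1 with rfl | hu1
  · rw [one_mul, numCycles_one, add_comm]
  obtain ⟨x, hx⟩ : ∃ x, u x ≠ x := by
    by_contra! hu
    exact hu1 (ext hu)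
  set u' := swap x (u x) * u
  have hu : swap x (u x) * u' = u := swap_mul_self_mul _ _ _
  have hsupp : u'.support ⊆ u.support := fun y hy =>
    mem_support.2 (ne_and_ne_of_swap_mul_apply_ne_self (mem_support.1 hy)).1
  have hxu : x ∈ u.support := mem_support.2 hx
  have hu'x : ¬u'.SameCycle x (u x) := fun h' =>
    hx (h'.eq_of_left (by simp [u', Function.IsFixedPt])).symm
  have hfix : ∀ z, h.SameCycle x z → u' z = z := fun z hz => by
    by_contra hz'
    obtain ⟨hz1, hz2⟩ := ne_and_ne_of_swap_mul_apply_ne_self hz'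
    exact hz2 (hsep x hxu z (mem_support.2 hz1) hz).symm
  have hxh : ¬(u' * h).SameCycle x (u x) := by
    rw [sameCycle_mul_iff_of_fixes hfix]
    exact fun h' => hx (hsep x hxu _ (apply_mem_support.2 hxu) h').symm
  have h1 := numCycles_swap_mul_add_one hu'x
  have h2 := numCycles_swap_mul_add_one hxh
  rw [hu] at h1
  rw [← mul_assoc, hu] at h2
  have := ih _ (hc ▸ card_support_swap_mul hx)
    (fun a ha b hb => hsep a (hsupp ha) b (hsupp hb)) rfl
  omega

theorem support_swap_mul_subset_insert {s : Finset α} {p t : α} (ht : t ∈ insert p s)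
    (hu : u.support ⊆ s) : (swap p t * u).support ⊆ insert p s := by
  intro y hy
  by_cases hys : y ∈ s
  · exact mem_insert_of_mem hys
  rw [mem_support, mul_apply, notMem_support.1 (fun h => hys (hu h))] at hy
  rcases (swap_apply_ne_self_iff.1 hy).2 with rfl | rfl
  · exact mem_insert_self _ _
  · exact ht

theorem sum_pow_card_sub_numCycles {R : Type*} [CommSemiring R] (r : R) (s : Finset α) :
    ∑ w ∈ univ.filter (·.support ⊆ s), r ^ (Nat.card α - numCycles w) =
      ∏ j ∈ range s.card, (1 + j * r) := by
  induction s using Finset.induction_on with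
  | empty =>
    have : univ.filter (fun w : Perm α => w.support ⊆ ∅) = {1} := by ext w; simp
    rw [this, sum_singleton, numCycles_one, Nat.sub_self, pow_zero, card_empty, prod_range_zero]
  | insert p s hp ih =>
    set N := Nat.card α
    -- `w = swap p t * u` with `t = w p` and `u p = p`
    have hsplit : ∑ w ∈ univ.filter (·.support ⊆ insert p s), r ^ (N - numCycles w) =
        ∑ tu ∈ insert p s ×ˢ univ.filter (·.support ⊆ s),
          r ^ (N - numCycles (swap p tu.1 * tu.2)) := by
      refine (sum_nbij' (fun tu => swap p tu.1 * tu.2) (fun w => (w p, swap p (w p) * w))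
        ?_ ?_ ?_ ?_ fun _ _ => rfl).symm
      · rintro ⟨t, u⟩ htu
        simp only [mem_product, mem_filter, mem_univ, true_and] at htu ⊢
        exact support_swap_mul_subset_insert htu.1 htu.2
      · intro w hw
        simp only [mem_product, mem_filter, mem_univ, true_and] at hw ⊢
        refine ⟨?_, fun y hy => ?_⟩
        · by_cases hwp : w p = p
          · rw [hwp]
            exact mem_insert_self _ _
          · exact hw (apply_mem_support.2 (mem_support.2 hwp))
        · obtain ⟨hwy, hyp⟩ := ne_and_ne_of_swap_mul_apply_ne_self (mem_support.1 hy)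
          exact (mem_insert.1 (hw (mem_support.2 hwy))).resolve_left hyp
      · rintro ⟨t, u⟩ htu
        simp only [mem_product, mem_filter, mem_univ, true_and] at htu
        have hup : u p = p := notMem_support.1 fun h => hp (htu.2 h)
        simp [hup]
      · intro w _
        exact swap_mul_self_mul _ _ _
    have hinner : ∀ u ∈ univ.filter (·.support ⊆ s),
        ∑ t ∈ insert p s, r ^ (N - numCycles (swap p t * u)) =
          r ^ (N - numCycles u) * (1 + s.card * r) := by
      intro u hu
      have hup : u p = p := notMem_support.1 fun h => hp ((mem_filter.1 hu).2 h)
      have hterm : ∀ t ∈ s, r ^ (N - numCycles (swap p t * u)) = r ^ (N - numCycles u) * r := by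
        intro t ht
        have hpt : p ≠ t := fun h => hp (h ▸ ht)
        have := numCycles_swap_mul_add_one (fun h => hpt (h.eq_of_left hup))
        have := numCycles_le_card u
        rw [← pow_succ]
        congr 1
        omega
      rw [sum_insert hp, swap_self, ← Perm.one_def, one_mul, sum_congr rfl hterm, sum_const,
        nsmul_eq_mul]
      ring
    rw [hsplit, sum_product_right, sum_congr rfl hinner, ← sum_mul, ih, card_insert_of_notMem hp,
      prod_range_succ]

theorem sum_pow_card_sub_numCycles_mul {R : Type*} [CommSemiring R] (r : R) {s : Finset α}
    (hs : ∀ x ∈ s, ∀ y ∈ s, h.SameCycle x y → x = y) :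
    ∑ u ∈ univ.filter (·.support ⊆ s), r ^ (Nat.card α - numCycles (u * h)) =
      r ^ (Nat.card α - numCycles h) * ∏ j ∈ range s.card, (1 + j * r) := by
  rw [← sum_pow_card_sub_numCycles, mul_sum]
  refine sum_congr rfl fun u hu => ?_
  have hus := (mem_filter.1 hu).2
  have := numCycles_mul_add_card fun x hx y hy => hs x (hus hx) y (hus hy)
  have := numCycles_le_card u
  have := numCycles_le_card h
  rw [← pow_add]
  congr 1
  omega

theorem sum_filter_support_subset_mul_right {M : Type*} [AddCommMonoid M] {s : Finset α}
    (hu : u.support ⊆ s) (F : Perm α → M) :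
    ∑ w ∈ univ.filter (·.support ⊆ s), F (w * u) =
      ∑ w ∈ univ.filter (·.support ⊆ s), F w := by
  refine sum_equiv (Equiv.mulRight u) (fun w => ?_) fun _ _ => rfl
  simp only [mem_filter, mem_univ, true_and, coe_mulRight]
  refine ⟨fun hw => (support_mul_le _ _).trans (sup_le hw hu), fun hw => ?_⟩
  rw [← mul_inv_cancel_right w u]
  exact (support_mul_le _ _).trans (sup_le hw (support_inv u ▸ hu))

theorem sameCycle_eq_of_forall_numCycles_le {s : Finset α} {g : Perm α} (hu : u.support ⊆ s)
    (hmax : ∀ w : Perm α, w.support ⊆ s → numCycles (w * g) ≤ numCycles (u * g)) :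
    ∀ x ∈ s, ∀ y ∈ s, (u * g).SameCycle x y → x = y := by
  intro x hx y hy hxy
  by_contra hne
  have hsupp : (swap x y * u).support ⊆ s := by
    refine (support_mul_le _ _).trans (sup_le ?_ hu)
    rw [support_swap hne]
    exact insert_subset hx (singleton_subset_iff.2 hy)
  have := hmax _ hsupp
  rw [mul_assoc, numCycles_swap_mul_of_sameCycle hne hxy] at this
  omega

end Support

end Equiv.Perm

theorem Finset.prod_range_eq_prod_Icc_of_eq_one {M : Type*} [CommMonoid M] {f : ℕ → M}
    (h0 : f 0 = 1) (k : ℕ) : ∏ j ∈ range k, f j = ∏ j ∈ Icc 1 (k - 1), f j := by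
  rcases k with _ | m
  · simp
  · rw [range_eq_Ico, prod_eq_prod_Ico_succ_bot m.succ_pos, h0, one_mul, Nat.succ_eq_add_one,
      Nat.add_sub_cancel, zero_add, Ico_add_one_right_eq_Icc]

theorem permCycles_eq_numCycles {n : ℕ} (w : Perm (Fin n)) : permCycles w = numCycles w := by
  rw [permCycles, MulAction.orbitRel.Quotient, orbitRel_zpowers, numCycles]

theorem inSymSub_iff_support_subset {n k : ℕ} {w : Perm (Fin n)} :
    inSymSub n k w ↔ w.support ⊆ univ.filter fun x : Fin n => (x : ℕ) < k := by
  constructor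
  · intro hw x hx
    rw [mem_filter_univ]
    by_contra! hk
    exact mem_support.1 hx (hw x hk)
  · intro hw x hx
    by_contra hwx
    exact ((mem_filter_univ _).1 (hw (mem_support.2 hwx))).not_ge hx

theorem stmt2_general (n k : ℕ) (hkn : k ≤ n) (g w₀ : Equiv.Perm (Fin n))
    (hw₀ : inSymSub n k w₀)
    (hmax : ∀ w : Equiv.Perm (Fin n), inSymSub n k w →
      permCycles (w * g) ≤ permCycles (w₀ * g)) :
    ∑ w ∈ Finset.univ.filter (inSymSub n k),
        (Polynomial.X : Polynomial ℤ) ^ (n - permCycles (w * g)) =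
    Polynomial.X ^ (n - permCycles (w₀ * g)) *
      ∏ j ∈ Finset.Icc 1 (k - 1), (1 + (j : Polynomial ℤ) * Polynomial.X) := by
  simp only [inSymSub_iff_support_subset, permCycles_eq_numCycles] at hw₀ hmax ⊢
  have hcard : (univ.filter fun x : Fin n => (x : ℕ) < k).card = k := by
    simp [Fin.card_filter_val_lt, hkn]
  have key := sum_pow_card_sub_numCycles_mul (Polynomial.X : Polynomial ℤ)
    (sameCycle_eq_of_forall_numCycles_le hw₀ hmax)
  rw [Nat.card_fin, hcard, prod_range_eq_prod_Icc_of_eq_one (by simp)] at key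
  rw [← sum_filter_support_subset_mul_right hw₀, ← key]
  simp only [mul_assoc]

/-- For `1 ≤ k ≤ n`, `g ∈ S_n`, and any `w₀ ∈ S_k` maximizing `w ↦ ν(wg)` on `S_k`:
`∑_{w ∈ S_k} α^{n−ν(wg)} = α^{n−ν(w₀g)} (1+α)(1+2α)⋯(1+(k−1)α)` in `ℤ[α]`. -/
theorem stmt2 (n k : ℕ) (hk1 : 1 ≤ k) (hkn : k ≤ n) (g w₀ : Equiv.Perm (Fin n))
    (hw₀ : inSymSub n k w₀)
    (hmax : ∀ w : Equiv.Perm (Fin n), inSymSub n k w →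
      permCycles (w * g) ≤ permCycles (w₀ * g)) :
    ∑ w ∈ Finset.univ.filter (inSymSub n k),
        (Polynomial.X : Polynomial ℤ) ^ (n - permCycles (w * g)) =
    Polynomial.X ^ (n - permCycles (w₀ * g)) *
      ∏ j ∈ Finset.Icc 1 (k - 1), (1 + (j : Polynomial ℤ) * Polynomial.X) :=
  stmt2_general n k hkn g w₀ hw₀ hmax
end

section
/- Fix n ≥ 1, a nonzero complex number q, and a map κ : {1,…,n} → ℤ. For a permutation w ∈ S_n and 1 ≤ i ≤ n−1, define θ_0(w,i) := 1−q² if κ(w(i)) > κ(w(i+1)) and θ_0(w,i) := 0 otherwise; define θ_1(w,i) := 1 if κ(w(i)) = κ(w(i+1)) and θ_1(w,i) := q otherwise. Write s_i for the transposition (i, i+1), and set s_i^0 := identity and s_i^1 := s_i. Then for every l ≥ 0, every sequence of indices i_1,…,i_l ∈ {1,…,n−1}, every sequence j_1,…,j_l ∈ {0,1}, and all σ, τ ∈ S_n satisfying κ∘(σ s_{i_1}^{j_1} ⋯ s_{i_l}^{j_l}) = κ∘τ (as functions on {1,…,n}), the following product identity holds: θ_{j_1}(σ, i_1) · θ_{j_2}(σ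 s_{i_1}^{j_1}, i_2) ⋯ θ_{j_l}(σ s_{i_1}^{j_1} ⋯ s_{i_{l−1}}^{j_{l−1}}, i_l) = θ_{j_l}(τ, i_l) · θ_{j_{l−1}}(τ s_{i_l}^{j_l}, i_{l−1}) ⋯ θ_{j_1}(τ s_{i_l}^{j_l} ⋯ s_{i_2}^{j_2}, i_1). -/
/-!
The identity holds factor by factor. Since every `s_i^j` is an involution, the hypothesis
`κ ∘ (σ s_{i_1}^{j_1} ⋯ s_{i_l}^{j_l}) = κ ∘ τ` says, for each `t`, that
`κ ∘ (σ s_{i_1}^{j_1} ⋯ s_{i_t}^{j_t}) = κ ∘ (τ s_{i_l}^{j_l} ⋯ s_{i_{t+1}}^{j_{t+1}})`.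
And `θ_j(w, i)` only depends on `κ ∘ (w s_i^j)`: for `j = 0` this is `κ ∘ w`, while for `j = 1`
both cases of `θ_1` are symmetric under exchanging the values at `i` and `i + 1`.
-/

/-- `s_i^j` for `j ∈ {0,1}`: the identity if `j = 0` (`b = false`),
and the simple transposition `s_i = (i, i+1)` if `j = 1` (`b = true`)
(positions of `Fin n` indexed from `0`, so `s_i` swaps `i` and `i+1`). -/
def sPow (n : ℕ) (i : ℕ) (b : Bool) : Equiv.Perm (Fin n) :=
  if b then (if h : i + 1 < n then Equiv.swap ⟨i, by omega⟩ ⟨i + 1, h⟩ else 1) else 1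

/-- `θ_j(w, i)` for `j ∈ {0,1}` (here `b = false` encodes `θ_0`, `b = true` encodes `θ_1`):
`θ_0(w,i) = 1 − q²` if `κ(w(i)) > κ(w(i+1))` and `0` otherwise;
`θ_1(w,i) = 1` if `κ(w(i)) = κ(w(i+1))` and `q` otherwise. -/
def theta (n : ℕ) (q : ℂ) (κ : Fin n → ℤ) (b : Bool) (w : Equiv.Perm (Fin n)) (i : ℕ) : ℂ :=
  if h : i + 1 < n then
    (if b then (if κ (w ⟨i, by omega⟩) = κ (w ⟨i + 1, h⟩) then 1 else q)
     else (if κ (w ⟨i + 1, h⟩) < κ (w ⟨i, by omega⟩) then 1 - q ^ 2 else 0))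
  else 0

lemma List.prod_reverse_eq_inv_prod_of_forall_inv_eq {G : Type*} [Group G] {l : List G}
    (h : ∀ g ∈ l, g⁻¹ = g) : l.reverse.prod = l.prod⁻¹ := by
  rw [List.prod_inv_reverse, List.map_congr_left h, List.map_id']

lemma sPow_inv (n i : ℕ) (b : Bool) : (sPow n i b)⁻¹ = sPow n i b := by
  unfold sPow
  split_ifs <;> simp

lemma theta_eq_of_comp_mul_sPow {n : ℕ} (q : ℂ) (κ : Fin n → ℤ) (b : Bool) (i : ℕ)
    {σ τ : Equiv.Perm (Fin n)} (h : ∀ x, κ ((σ * sPow n i b) x) = κ (τ x)) :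
    theta n q κ b σ i = theta n q κ b τ i := by
  unfold theta
  by_cases hi : i + 1 < n
  · simp only [dif_pos hi]
    cases b
    · simp only [sPow, Bool.false_eq_true, if_false, mul_one] at h
      simp only [h, Bool.false_eq_true, if_false]
    · have hs : sPow n i true = Equiv.swap ⟨i, by omega⟩ ⟨i + 1, hi⟩ := by simp [sPow, hi]
      have h₁ := h ⟨i, by omega⟩
      have h₂ := h ⟨i + 1, hi⟩
      simp only [hs, Equiv.Perm.mul_apply, Equiv.swap_apply_left, Equiv.swap_apply_right]
        at h₁ h₂
      simp only [if_true, h₁, h₂, eq_comm]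
  · simp only [dif_neg hi]

theorem stmt5_general (n : ℕ) (q : ℂ) (κ : Fin n → ℤ)
    (L : ℕ) (idx : Fin L → ℕ) (bits : Fin L → Bool)
    (σ τ : Equiv.Perm (Fin n))
    (hκτ : ∀ x : Fin n,
      κ ((σ * (List.ofFn fun s : Fin L => sPow n (idx s) (bits s)).prod) x) = κ (τ x)) :
    ∏ t : Fin L,
        theta n q κ (bits t)
          (σ * ((List.ofFn fun s : Fin L => sPow n (idx s) (bits s)).take (t : ℕ)).prod)
          (idx t)
      =
    ∏ t : Fin L,
        theta n q κ (bits t)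
          (τ * (((List.ofFn fun s : Fin L => sPow n (idx s) (bits s)).drop ((t : ℕ) + 1)).reverse).prod)
          (idx t) := by
  set l := List.ofFn fun s : Fin L => sPow n (idx s) (bits s)
  refine Finset.prod_congr rfl fun t _ => theta_eq_of_comp_mul_sPow q κ _ _ fun x => ?_
  have hsplit : l.prod = (l.take t).prod * sPow n (idx t) (bits t) * (l.drop (t + 1)).prod := by
    rw [← List.prod_take_mul_prod_drop l (t + 1), List.prod_take_succ _ _ (by simp [l])]
    simp [l]
  have hrev : (l.drop (t + 1)).reverse.prod = (l.drop (t + 1)).prod⁻¹ :=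
    List.prod_reverse_eq_inv_prod_of_forall_inv_eq fun g hg => by
      obtain ⟨s, rfl⟩ := List.mem_ofFn.1 (List.mem_of_mem_drop hg)
      exact sPow_inv _ _ _
  simpa [hsplit, hrev, mul_assoc] using hκτ ((l.drop (t + 1)).prod⁻¹ x)

/-- Given indices `i_1,…,i_l ∈ {1,…,n−1}` and exponents `j_1,…,j_l ∈ {0,1}`,
if `κ∘(σ s_{i_1}^{j_1} ⋯ s_{i_l}^{j_l}) = κ∘τ` then
`θ_{j_1}(σ,i_1) θ_{j_2}(σ s_{i_1}^{j_1},i_2) ⋯ θ_{j_l}(σ s_{i_1}^{j_1}⋯s_{i_{l−1}}^{j_{l−1}},i_l)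
 = θ_{j_l}(τ,i_l) θ_{j_{l−1}}(τ s_{i_l}^{j_l},i_{l−1}) ⋯ θ_{j_1}(τ s_{i_l}^{j_l}⋯s_{i_2}^{j_2},i_1)`. -/
theorem stmt5 (n : ℕ) (hn : 1 ≤ n) (q : ℂ) (hq : q ≠ 0) (κ : Fin n → ℤ)
    (L : ℕ) (idx : Fin L → ℕ) (hidx : ∀ s : Fin L, idx s + 1 < n) (bits : Fin L → Bool)
    (σ τ : Equiv.Perm (Fin n))
    (hκτ : ∀ x : Fin n,
      κ ((σ * (List.ofFn fun s : Fin L => sPow n (idx s) (bits s)).prod) x) = κ (τ x)) :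
    ∏ t : Fin L,
        theta n q κ (bits t)
          (σ * ((List.ofFn fun s : Fin L => sPow n (idx s) (bits s)).take (t : ℕ)).prod)
          (idx t)
      =
    ∏ t : Fin L,
        theta n q κ (bits t)
          (τ * (((List.ofFn fun s : Fin L => sPow n (idx s) (bits s)).drop ((t : ℕ) + 1)).reverse).prod)
          (idx t) :=
  stmt5_general n q κ L idx bits σ τ hκτ
end

section
/- Let k ≥ 1 and let c_1,…,c_n be a finite sequence (of elements of any type) and fix a value v. If the number of positions p with c_p = v is strictly greater than k · (1 + the number of positions p with c_p ≠ v), then the sequence contains k+1 consecutive entries equal to v; that is, there exists a position p with 1 ≤ p and p+k ≤ n such that c_p = c_{p+1} = ⋯ = c_{p+k} = v. -/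
/-! Count, for each position `p`, the bad positions (entries `≠ v`) before it. This count takes at
most `1 + #bad` values, and the good positions sharing a value form a run of consecutive entries
equal to `v`; if every run has at most `k` elements, there are at most `k * (1 + #bad)` good
positions. -/

open Finset Nat

theorem Nat.count_eq_card_filter_fin (Q : ℕ → Prop) [DecidablePred Q] (n : ℕ) :
    count Q n = #{i : Fin n | Q i} := by
  rw [count_eq_card_filter_range, ← Nat.Iio_eq_range, ← Fin.map_valEmbedding_univ, filter_map,
    card_map]
  rfl

theorem Finset.card_le_of_forall_lt_add {t : Finset ℕ} {k : ℕ}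
    (h : ∀ p ∈ t, ∀ q ∈ t, p ≤ q → q < p + k) : #t ≤ k := by
  rcases t.eq_empty_or_nonempty with rfl | ht
  · simp
  have hsub : t ⊆ Ico (t.min' ht) (t.min' ht + k) := fun q hq =>
    mem_Ico.2 ⟨t.min'_le q hq, h _ (t.min'_mem ht) q hq (t.min'_le q hq)⟩
  simpa using card_le_card hsub

section

variable (P : ℕ → Prop) [DecidablePred P]

theorem Nat.of_count_not_eq_count_not {a b x : ℕ}
    (hab : count (fun y => ¬P y) a = count (fun y => ¬P y) b) (hb : P b) (hax : a ≤ x)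
    (hxb : x ≤ b) : P x := by
  rcases hxb.lt_or_eq with hxb | rfl
  · by_contra hx
    have := (count_monotone _ hax).trans_lt (count_strict_mono (p := fun y => ¬P y) hx hxb)
    omega
  · exact hb

theorem Nat.count_le_mul_one_add_count_not {n k : ℕ}
    (hrun : ∀ p, p + k < n → ∃ t ≤ k, ¬P (p + t)) :
    count P n ≤ k * (1 + count (fun y => ¬P y) n) := by
  rw [count_eq_card_filter_range, add_comm 1, ← card_range (count _ n + 1)]
  refine card_le_mul_card_image_of_maps_to (f := count fun y => ¬P y) ?_ k ?_
  · intro p hp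
    simp only [mem_filter, mem_range] at hp ⊢
    exact Nat.lt_succ_of_le (count_monotone _ hp.1.le)
  · intro j _
    refine card_le_of_forall_lt_add fun p hp q hq hpq => ?_
    simp only [mem_filter, mem_range] at hp hq
    by_contra! hgap
    obtain ⟨t, ht, hbad⟩ := hrun p (by omega)
    exact hbad <| of_count_not_eq_count_not P (hp.2.trans hq.2.symm) hq.1.2
      (Nat.le_add_right p t) (by omega)

end

/-- Pigeonhole: if a sequence `c_1,…,c_n` has strictly more than
`k·(1 + #{p : c_p ≠ v})` entries equal to `v` (with `k ≥ 1`), then it contains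
`k+1` consecutive entries equal to `v`. -/
theorem stmt6 {β : Type*} [DecidableEq β] (n k : ℕ)
    (c : Fin n → β) (v : β)
    (h : k * (1 + (Finset.univ.filter fun p : Fin n => c p ≠ v).card) <
         (Finset.univ.filter fun p : Fin n => c p = v).card) :
    ∃ p : ℕ, ∃ hp : p + k < n, ∀ t : ℕ, ∀ ht : t ≤ k, c ⟨p + t, by omega⟩ = v := by
  by_contra! hrun
  let d : ℕ → β := fun p => if hp : p < n then c ⟨p, hp⟩ else v
  have hcount := count_le_mul_one_add_count_not (fun p => d p = v) (n := n) (k := k)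
    fun p hp => by
      obtain ⟨t, ht, hbad⟩ := hrun p hp
      exact ⟨t, ht, by simpa [d, show p + t < n by omega] using hbad⟩
  simp only [count_eq_card_filter_fin, d, Fin.is_lt, dite_true, Fin.eta] at hcount
  exact hcount.not_gt h
end
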